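/- For an F_man-algebra, with ∇_u defined as the endomorphism A_u = (1/2)ad_u + S_u and ad_v ∈ End(g), one has the identity: the curvature endomorphism R(u,v) := [A_u, A_v] - A_{[u,v]} equals -(1/4)ad_{[u,v]} + (1/2)(L(u,v) - L(v,u)) as endomorphisms of g. -/
import Mathlib


variable {V : Type*} [AddCommGroup V] [Module ℝ V]

/-- The endomorphism A_u := (1/2)ad_u + S_u, where ad_u = br u, S_u = mul u. -/
noncomputable def Aend (mul br : V →ₗ[ℝ] V →ₗ[ℝ] V) (u : V) : V →ₗ[ℝ] V :=
  (2⁻¹ : ℝ) • br u + mul u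

/-- The Leibnizator endomorphism L(u,v) := [ad_u, S_v] - S_{[u,v]}. -/
def Lend (mul br : V →ₗ[ℝ] V →ₗ[ℝ] V) (u v : V) : V →ₗ[ℝ] V :=
  br u ∘ₗ mul v - mul v ∘ₗ br u - mul (br u v)

/-- The curvature endomorphism R(u,v) := [A_u,A_v] - A_{[u,v]} equals
-(1/4)ad_{[u,v]} + (1/2)(L(u,v) - L(v,u)). -/
theorem curvature_endomorphism (mul br : V →ₗ[ℝ] V →ₗ[ℝ] V)
    (hcomm : ∀ u v, mul u v = mul v u)
    (hassoc : ∀ u v w, mul (mul u v) w = mul u (mul v w))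
    (hanti : ∀ u v, br u v = - br v u)
    (hjac : ∀ u v w, br u (br v w) = br (br u v) w + br v (br u w)) :
    ∀ u v, (Aend mul br u ∘ₗ Aend mul br v - Aend mul br v ∘ₗ Aend mul br u)
        - Aend mul br (br u v)
      = -(4⁻¹ : ℝ) • br (br u v)
        + (2⁻¹ : ℝ) • (Lend mul br u v - Lend mul br v u) := by
  intro u v
  ext w
  simp only [Aend, Lend, LinearMap.sub_apply, LinearMap.add_apply, LinearMap.comp_apply,
    LinearMap.smul_apply, map_add, map_smul, LinearMap.neg_apply, smul_add, smul_sub]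
  rw [hjac u v w, hanti v u, show mul u (mul v w) = mul v (mul u w) by
        rw [← hassoc, hcomm u v, hassoc]]
  simp only [map_neg, LinearMap.neg_apply]
  module
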